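/- Let f : {0,1}^n → {0,1}^{nα} be chosen uniformly at random among all functions, with α, β, δ > 0 and α + β + δ < 1. Fix a subset I ⊆ {1,…,n} with |I| = nβ and a string y ∈ {0,1}^{|I|}. Let X be uniform on {0,1}^n. Then with probability at least 1 − 2^{−2^{nα}(2^{n(1−β−α−δ)} − n(1−β+1/n))} over the choice of f, the conditional entropy satisfies H(f(X) | X|_I = y) ≥ nα − 2^{−nδ}. -/

import Mathlib

/-! Method of types. The inputs consistent with `y` form a set `S` of `N = 2^(n(1-β))` points, and
the entropy in question is that of the empirical distribution `k/N` of `f` on `S`. Weighting every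
function `f` by `∏_{x ∈ S} k_{f x}/N = 2^(-N·H(k/N))` and summing over all functions gives
`M^(2^n - N)`, where `M = 2^(nα)`; so at most `M^(2^n - N) · 2^(N·H(k/N))` functions have fibre
counts `k`. When `H(k/N) < nα - ε` this is at most `M^(2^n) · 2^(-Nε)`, and there are at most
`(N+1)^M ≤ 2^(M(n(1-β)+1))` count vectors. With `ε = 2^(-nδ)` the resulting exponent
`M(n(1-β)+1) - Nε` is the one in the statement. -/

open Finset

/-- Shannon entropy in bits of a distribution on a finite set. -/
noncomputable def shEnt {S : Type*} [Fintype S] (p : S → ℝ) : ℝ :=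
  -∑ x, p x * Real.logb 2 (p x)

/-- The conditional entropy `H(f(X) | X|_I = y)` where `X` is uniform on `{0,1}^n`:
the entropy of the image of `f` on the inputs consistent with `y` on `I`,
each such input being equally likely. -/
noncomputable def condImgEnt {n a : ℕ} (f : (Fin n → Bool) → (Fin a → Bool))
    (I : Finset (Fin n)) (y : {i // i ∈ I} → Bool) : ℝ :=
  shEnt (fun v : Fin a → Bool =>
    ((Finset.univ.filter (fun x : Fin n → Bool =>
        (∀ i : {i // i ∈ I}, x i.1 = y i) ∧ f x = v)).card : ℝ) /
    ((Finset.univ.filter (fun x : Fin n → Bool =>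
        ∀ i : {i // i ∈ I}, x i.1 = y i)).card : ℝ))

lemma prod_div_pow_eq_two_rpow_neg_mul_shEnt {V : Type*} [Fintype V] (k : V → ℕ) {N : ℕ}
    (hN : N ≠ 0) : ∏ v, ((k v : ℝ) / N) ^ k v = 2 ^ (-(N * shEnt fun v => (k v : ℝ) / N)) := by
  have hexp : -(N * shEnt fun v => (k v : ℝ) / N) = ∑ v, k v * Real.logb 2 (k v / N) := by
    rw [shEnt, mul_neg, neg_neg, mul_sum]
    refine sum_congr rfl fun v _ => ?_
    field_simp
  rw [hexp, Real.rpow_sum_of_pos two_pos]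
  refine prod_congr rfl fun v _ => ?_
  rcases (k v).eq_zero_or_pos with hk | hk
  · simp [hk]
  · rw [mul_comm, Real.rpow_mul zero_le_two, Real.rpow_logb two_pos (by norm_num) (by positivity),
      Real.rpow_natCast]

lemma sum_fun_prod_apply_eq {D V R : Type*} [Fintype D] [DecidableEq D] [Fintype V]
    [CommSemiring R] (S : Finset D) (p : V → R) (hp : ∑ v, p v = 1) :
    ∑ g : D → V, ∏ x ∈ S, p (g x) = Fintype.card V ^ (Fintype.card D - #S) := by
  have hrestrict (g : D → V) : ∏ x ∈ S, p (g x) = ∏ x, if x ∈ S then p (g x) else 1 := by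
    rw [prod_ite_mem, univ_inter]
  have hsum (x : D) :
      ∑ v, (if x ∈ S then p v else 1) = if x ∈ S then 1 else (Fintype.card V : R) := by
    split_ifs <;> simp [hp]
  simp_rw [hrestrict, ← Fintype.prod_sum (fun x v => if x ∈ S then p v else 1), hsum,
    prod_ite, prod_const_one, one_mul, prod_const, ← card_compl]
  congr 2
  ext x; simp

section Types

variable {D V : Type*} [DecidableEq V]

def fiberCounts (S : Finset D) (g : D → V) (v : V) : ℕ := #{x ∈ S | g x = v}

lemma fiberCounts_le (S : Finset D) (g : D → V) (v : V) : fiberCounts S g v ≤ #S :=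
  card_filter_le _ _

variable [Fintype V]

lemma sum_fiberCounts (S : Finset D) (g : D → V) : ∑ v, fiberCounts S g v = #S :=
  (card_eq_sum_card_fiberwise fun x _ => mem_univ (g x)).symm

lemma prod_comp_eq_prod_pow_fiberCounts {M : Type*} [CommMonoid M] (S : Finset D) (g : D → V)
    (p : V → M) : ∏ x ∈ S, p (g x) = ∏ v, p v ^ fiberCounts S g v := by
  rw [prod_comp]
  refine prod_subset (subset_univ _) fun v _ hv => ?_
  rw [filter_false_of_mem fun x hx hgx => hv (mem_image.2 ⟨x, hx, hgx⟩), card_empty, pow_zero]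

variable [Fintype D] [DecidableEq D]

def typeClass (S : Finset D) (k : V → ℕ) : Finset (D → V) := {g | fiberCounts S g = k}

lemma card_typeClass_mul_prod_pow_le {R : Type*} [CommSemiring R] [PartialOrder R]
    [IsOrderedRing R] (S : Finset D) (k : V → ℕ) (p : V → R) (hp0 : ∀ v, 0 ≤ p v)
    (hp1 : ∑ v, p v = 1) :
    #(typeClass S k) * ∏ v, p v ^ k v ≤ (Fintype.card V : R) ^ (Fintype.card D - #S) := by
  rw [← sum_fun_prod_apply_eq S p hp1, ← nsmul_eq_mul, ← sum_const]
  calc ∑ _g ∈ typeClass S k, ∏ v, p v ^ k v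
      = ∑ g ∈ typeClass S k, ∏ x ∈ S, p (g x) := by
        refine sum_congr rfl fun g hg => ?_
        rw [prod_comp_eq_prod_pow_fiberCounts, (mem_filter.1 hg).2]
    _ ≤ ∑ g : D → V, ∏ x ∈ S, p (g x) :=
        sum_le_sum_of_subset_of_nonneg (subset_univ _) fun _ _ _ =>
          prod_nonneg fun _ _ => hp0 _

lemma card_typeClass_le (S : Finset D) (k : V → ℕ) (hS : #S ≠ 0) (hk : ∑ v, k v = #S) :
    (#(typeClass S k) : ℝ) ≤
      Fintype.card V ^ (Fintype.card D - #S) * 2 ^ (#S * shEnt fun v => (k v : ℝ) / #S) := by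
  have hcount := card_typeClass_mul_prod_pow_le S k (fun v => (k v : ℝ) / #S)
    (fun v => by positivity) (by
      rw [← sum_div, ← Nat.cast_sum, hk, div_self (Nat.cast_ne_zero.2 hS)])
  rwa [prod_div_pow_eq_two_rpow_neg_mul_shEnt k hS, Real.rpow_neg zero_le_two, ← div_eq_mul_inv,
    div_le_iff₀ (by positivity)] at hcount

lemma card_filter_shEnt_lt_le (S : Finset D) (hS : #S ≠ 0) (h : ℝ) :
    (#{g : D → V | shEnt (fun v => (fiberCounts S g v : ℝ) / #S) < h} : ℝ) ≤
      (#S + 1) ^ Fintype.card V * (Fintype.card V ^ (Fintype.card D - #S) * 2 ^ (#S * h)) := by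
  set B : Finset (D → V) := {g | shEnt (fun v => (fiberCounts S g v : ℝ) / #S) < h}
  have htypes : #(B.image (fiberCounts S)) ≤ (#S + 1) ^ Fintype.card V := by
    calc #(B.image (fiberCounts S))
        ≤ #(Fintype.piFinset fun _ : V => range (#S + 1)) :=
          card_le_card fun k hk => by
            obtain ⟨g, -, rfl⟩ := mem_image.1 hk
            exact Fintype.mem_piFinset.2 fun v =>
              mem_range.2 (Nat.lt_succ_of_le (fiberCounts_le S g v))
      _ = (#S + 1) ^ Fintype.card V := by simp
  have hclass : ∀ k ∈ B.image (fiberCounts S), (#{g ∈ B | fiberCounts S g = k} : ℝ) ≤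
      Fintype.card V ^ (Fintype.card D - #S) * 2 ^ (#S * h) := by
    rintro _ hk
    obtain ⟨g, hg, rfl⟩ := mem_image.1 hk
    calc (#{g' ∈ B | fiberCounts S g' = fiberCounts S g} : ℝ)
        ≤ #(typeClass S (fiberCounts S g)) :=
          Nat.cast_le.2 (card_le_card (filter_subset_filter _ (subset_univ B)))
      _ ≤ _ := card_typeClass_le S _ hS (sum_fiberCounts S g)
      _ ≤ _ := by
          gcongr
          · norm_num
          · exact (mem_filter.1 hg).2.le
  calc (#B : ℝ) = ∑ k ∈ B.image (fiberCounts S), (#{g ∈ B | fiberCounts S g = k} : ℝ) := by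
        rw [card_eq_sum_card_image (fiberCounts S) B, Nat.cast_sum]
    _ ≤ #(B.image (fiberCounts S)) • (Fintype.card V ^ (Fintype.card D - #S) * 2 ^ (#S * h)) :=
        sum_le_card_nsmul _ _ _ hclass
    _ ≤ _ := by
        rw [nsmul_eq_mul]
        gcongr
        exact_mod_cast htypes

lemma one_sub_le_card_filter_le_shEnt_div [Nonempty V] (S : Finset D) (hS : #S ≠ 0) (ε : ℝ) :
    1 - (#S + 1) ^ Fintype.card V * 2 ^ (-(#S * ε)) ≤
      (#{g : D → V | Real.logb 2 (Fintype.card V) - ε ≤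
          shEnt fun v => (fiberCounts S g v : ℝ) / #S} : ℝ) / Fintype.card (D → V) := by
  set P : (D → V) → Prop := fun g =>
    Real.logb 2 (Fintype.card V) - ε ≤ shEnt fun v => (fiberCounts S g v : ℝ) / #S
  have hpos : (0 : ℝ) < Fintype.card (D → V) := by exact_mod_cast Fintype.card_pos
  have hsplit : (#{g | P g} : ℝ) = Fintype.card (D → V) - #{g | ¬P g} := by
    rw [eq_sub_iff_add_eq, ← Nat.cast_add, card_filter_add_card_filter_not, card_univ]
  have hmax : (Fintype.card V : ℝ) ^ (Fintype.card D - #S) *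
      2 ^ (#S * Real.logb 2 (Fintype.card V)) = Fintype.card (D → V) := by
    rw [mul_comm (#S : ℝ), Real.rpow_mul zero_le_two,
      Real.rpow_logb two_pos (by norm_num) (by exact_mod_cast Fintype.card_pos), Real.rpow_natCast,
      ← pow_add, Nat.sub_add_cancel (card_le_univ S), Fintype.card_fun, Nat.cast_pow]
  have hbad : (#{g | ¬P g} : ℝ) ≤
      (#S + 1) ^ Fintype.card V * 2 ^ (-(#S * ε)) * Fintype.card (D → V) := by
    calc (#{g | ¬P g} : ℝ)
        ≤ (#S + 1) ^ Fintype.card V * (Fintype.card V ^ (Fintype.card D - #S) *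
            2 ^ (#S * (Real.logb 2 (Fintype.card V) - ε))) := by
          simp_rw [P, not_le]
          exact card_filter_shEnt_lt_le S hS _
      _ = _ := by
          rw [mul_sub, sub_eq_add_neg, Real.rpow_add two_pos, ← hmax]
          ring
  rw [hsplit, sub_div, div_self hpos.ne', sub_le_sub_iff_left, div_le_iff₀ hpos]
  exact hbad

end Types

lemma card_filter_forall_apply_eq {ι β : Type*} [Fintype ι] [DecidableEq ι] [Fintype β]
    [DecidableEq β] (I : Finset ι) (y : I → β) :
    #{x : ι → β | ∀ i : I, x i = y i} = Fintype.card β ^ (Fintype.card ι - #I) := by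
  have hpi : ({x : ι → β | ∀ i : I, x i = y i} : Finset (ι → β)) =
      Fintype.piFinset fun i => if h : i ∈ I then {y ⟨i, h⟩} else univ := by
    ext x
    simp only [mem_filter, mem_univ, true_and, Fintype.mem_piFinset]
    refine ⟨fun hx i => ?_, fun hx i => ?_⟩
    · split_ifs with h
      · exact mem_singleton.2 (hx ⟨i, h⟩)
      · exact mem_univ _
    · simpa [i.2] using hx i
  rw [hpi, Fintype.card_piFinset]
  simp only [apply_dite card, card_singleton, card_univ, prod_dite, prod_const_one, one_mul,
    prod_const]
  rw [Fintype.card_coe, ← card_compl]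
  congr 2
  ext; simp

lemma add_one_pow_le_two_rpow (r M : ℕ) : ((2 : ℝ) ^ r + 1) ^ M ≤ 2 ^ ((M : ℝ) * (r + 1)) := by
  have hbase : (2 : ℝ) ^ r + 1 ≤ 2 ^ (r + 1) := by
    rw [pow_succ]
    linarith [one_le_pow₀ (M₀ := ℝ) one_le_two (n := r)]
  calc ((2 : ℝ) ^ r + 1) ^ M ≤ (2 ^ (r + 1)) ^ M := pow_le_pow_left₀ (by positivity) hbase M
    _ = 2 ^ ((M : ℝ) * (r + 1)) := by
        rw [← pow_mul, ← Real.rpow_natCast]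
        push_cast
        ring_nf

lemma failure_exponent_eq {n α β δ : ℝ} (hn : n ≠ 0) :
    -(2 ^ (n * α) * (2 ^ (n * (1 - β - α - δ)) - n * (1 - β + 1 / n))) =
      2 ^ (n * α) * (n * (1 - β) + 1) + -(2 ^ (n * (1 - β)) * 2 ^ (-(n * δ))) := by
  rw [mul_sub, ← Real.rpow_add two_pos, ← Real.rpow_add two_pos, mul_add, mul_one_div_cancel hn]
  ring_nf

open scoped Classical in
theorem stmt_13_general (n a : ℕ) (hn : 1 ≤ n) (α β δ : ℝ)
    (ha : (a : ℝ) = (n : ℝ) * α)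
    (I : Finset (Fin n)) (hI : (I.card : ℝ) = (n : ℝ) * β)
    (y : {i // i ∈ I} → Bool) :
    1 - (2 : ℝ) ^ (-((2 : ℝ) ^ ((n : ℝ) * α) *
        ((2 : ℝ) ^ ((n : ℝ) * (1 - β - α - δ)) - (n : ℝ) * (1 - β + 1 / (n : ℝ)))))
    ≤ ((Finset.univ.filter (fun f : (Fin n → Bool) → (Fin a → Bool) =>
          (n : ℝ) * α - (2 : ℝ) ^ (-((n : ℝ) * δ)) ≤ condImgEnt f I y)).card : ℝ) /
      (Fintype.card ((Fin n → Bool) → (Fin a → Bool)) : ℝ) := by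
  set S : Finset (Fin n → Bool) := {x | ∀ i : I, x i = y i}
  have hS : #S = 2 ^ (n - #I) := (card_filter_forall_apply_eq I y).trans (by simp)
  have hV : Fintype.card (Fin a → Bool) = 2 ^ a := by simp
  have hcond (f : (Fin n → Bool) → Fin a → Bool) :
      condImgEnt f I y = shEnt fun v => (fiberCounts S f v : ℝ) / #S := by
    simp only [condImgEnt, fiberCounts, S, filter_filter]
  have hlogb : Real.logb 2 (Fintype.card (Fin a → Bool)) = n * α := by
    rw [hV, Nat.cast_pow, Nat.cast_ofNat, Real.logb_pow, Real.logb_self_eq_one one_lt_two,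
      mul_one, ha]
  have hr : ((n - #I : ℕ) : ℝ) = n * (1 - β) := by
    rw [Nat.cast_sub (by simpa using card_le_univ I), hI]
    ring
  have hN : (2 : ℝ) ^ (n * (1 - β)) = #S := by
    rw [hS, Nat.cast_pow, Nat.cast_ofNat, ← Real.rpow_natCast, hr]
  have hfrac := one_sub_le_card_filter_le_shEnt_div (V := Fin a → Bool) S (by rw [hS]; positivity)
    (2 ^ (-(n * δ)))
  simp_rw [hlogb, ← hcond] at hfrac
  refine le_trans ?_ (hfrac.trans_eq (by congr))
  rw [failure_exponent_eq (by positivity), hN, ← ha, Real.rpow_natCast, ← hr,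
    Real.rpow_add two_pos, hV, hS]
  gcongr
  exact_mod_cast add_one_pow_le_two_rpow (n - #I) (2 ^ a)

open scoped Classical in
/-- For a fixed `I` with `|I| = nβ` and fixed `y`, a uniformly random function
`f : {0,1}^n → {0,1}^(nα)` satisfies `H(f(X) | X|_I = y) ≥ nα − 2^(−nδ)` with
probability at least `1 − 2^(−2^(nα)(2^(n(1−β−α−δ)) − n(1−β+1/n)))`. -/
theorem stmt_13 (n a : ℕ) (hn : 1 ≤ n) (α β δ : ℝ)
    (hα : 0 < α) (hβ : 0 < β) (hδ : 0 < δ) (hsum : α + β + δ < 1)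
    (ha : (a : ℝ) = (n : ℝ) * α)
    (I : Finset (Fin n)) (hI : (I.card : ℝ) = (n : ℝ) * β)
    (y : {i // i ∈ I} → Bool) :
    1 - (2 : ℝ) ^ (-((2 : ℝ) ^ ((n : ℝ) * α) *
        ((2 : ℝ) ^ ((n : ℝ) * (1 - β - α - δ)) - (n : ℝ) * (1 - β + 1 / (n : ℝ)))))
    ≤ ((Finset.univ.filter (fun f : (Fin n → Bool) → (Fin a → Bool) =>
          (n : ℝ) * α - (2 : ℝ) ^ (-((n : ℝ) * δ)) ≤ condImgEnt f I y)).card : ℝ) /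
      (Fintype.card ((Fin n → Bool) → (Fin a → Bool)) : ℝ) :=
  stmt_13_general n a hn α β δ ha I hI y
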